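/- arXiv:1507.02051 — 3 statements merged into one kernel-verified Lean document; each statement's English description precedes it below -/
import Mathlib

section
/- Assume that f0⁺(y) > 0 for every y ∈ Y such that A*y = 0, S y = 0, and not (f0⁺(y) = 0 and f0⁺(−y) = 0). Then the y-subproblem is solvable: there exists ŷ ∈ dom f such that F(ŷ) ≤ F(y) for all y ∈ Y. -/
open scoped RealInnerProductSpace
open Filter Bornology

noncomputable section

variable {X Y Z : Type*}
variable [NormedAddCommGroup X] [InnerProductSpace ℝ X] [FiniteDimensional ℝ X]
variable [NormedAddCommGroup Y] [InnerProductSpace ℝ Y] [FiniteDimensional ℝ Y]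
variable [NormedAddCommGroup Z] [InnerProductSpace ℝ Z] [FiniteDimensional ℝ Z]

/-- `f : E → ℝ ∪ {+∞}` is proper, convex and lower semicontinuous. -/
def ProperConvexLsc {E : Type*} [NormedAddCommGroup E] [InnerProductSpace ℝ E]
    (f : E → EReal) : Prop :=
  (∃ u, f u ≠ ⊤) ∧ (∀ u, f u ≠ ⊥) ∧
    (∀ u v : E, ∀ a b : ℝ, 0 ≤ a → 0 ≤ b → a + b = 1 →
      f (a • u + b • v) ≤ (a : EReal) * f u + (b : EReal) * f v) ∧
    LowerSemicontinuous f

/-- `frec` is the recession function of `f`:  for any `u₀` in the effective domain of `f`,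
`frec u = lim_{ρ → +∞} (f (u₀ + ρ u) - f u₀) / ρ`. -/
def IsRecessionFn {E : Type*} [NormedAddCommGroup E] [InnerProductSpace ℝ E]
    (f : E → EReal) (frec : E → EReal) : Prop :=
  ∀ u₀ : E, f u₀ ≠ ⊤ → ∀ u : E,
    Tendsto (fun ρ : ℝ => (f (u₀ + ρ • u) - f u₀) * ((ρ⁻¹ : ℝ) : EReal))
      atTop (nhds (frec u))

/-- The augmented Lagrangian `L_σ(y, z; x)` of the problem
`min f(y) + g(z)  s.t.  A* y + B* z = c`. -/
def augL (f : Y → EReal) (g : Z → EReal) (A : X →ₗ[ℝ] Y) (B : X →ₗ[ℝ] Z)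
    (c : X) (σ : ℝ) (y : Y) (z : Z) (x : X) : EReal :=
  f y + g z + ((⟪x, (LinearMap.adjoint A) y + (LinearMap.adjoint B) z - c⟫ : ℝ) : EReal)
    + ((σ / 2 * ‖(LinearMap.adjoint A) y + (LinearMap.adjoint B) z - c‖ ^ 2 : ℝ) : EReal)

/-- Objective of the `y`-subproblem:  `F(w) = L_σ(w, z'; x') + (1/2) ‖w - y'‖_S²`. -/
def ysub (f : Y → EReal) (g : Z → EReal) (A : X →ₗ[ℝ] Y) (B : X →ₗ[ℝ] Z)
    (c : X) (σ : ℝ) (S : Y →ₗ[ℝ] Y) (x' : X) (y' : Y) (z' : Z) (w : Y) : EReal :=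
  augL f g A B c σ w z' x' + ((⟪w - y', S (w - y')⟫ / 2 : ℝ) : EReal)

/-- Objective of the `z`-subproblem:  `G(w) = L_σ(y', w; x') + (1/2) ‖w - z'‖_T²`. -/
def zsub (f : Y → EReal) (g : Z → EReal) (A : X →ₗ[ℝ] Y) (B : X →ₗ[ℝ] Z)
    (c : X) (σ : ℝ) (T : Z →ₗ[ℝ] Z) (x' : X) (y' : Y) (z' : Z) (w : Z) : EReal :=
  augL f g A B c σ y' w x' + ((⟪w - z', T (w - z')⟫ / 2 : ℝ) : EReal)

/-!
Write the objective as `F = f + ψ` with `ψ` a convex quadratic. `F` is invariant under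
translation by `L = ker A* ∩ ker S ∩ (constancy space of f)`, so it suffices to minimize it over
the closed convex set `{w ∈ Lᗮ | F w ≤ F y'}`, which is compact once it is bounded. If it were
unbounded it would contain a ray `x + ℝ₊ d` with `d ∈ Lᗮ`, `‖d‖ = 1`. Along the ray `f` grows at
least linearly while `ψ` grows like `ρ² (σ ‖A* d‖² + ⟪d, S d⟫) / 2`, so `A* d = 0` and `S d = 0`.
Then `ψ` is constant on the ray, `f` is bounded above on it, hence `f0⁺(d) ≤ 0`, and the
hypothesis forces `f0⁺(d) = f0⁺(-d) = 0`, i.e. `d ∈ L`: a contradiction.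
-/

open Set Topology

section Recession

theorem Convex.exists_unit_ray_subset_of_not_isBounded {E : Type*} [NormedAddCommGroup E]
    [NormedSpace ℝ E] [FiniteDimensional ℝ E] {C : Set E} (hconv : Convex ℝ C)
    (hclosed : IsClosed C) (hC : ¬IsBounded C) {x : E} (hx : x ∈ C) :
    ∃ d : E, ‖d‖ = 1 ∧ ∀ ρ : ℝ, 0 ≤ ρ → x + ρ • d ∈ C := by
  have hfar : ∀ n : ℕ, ∃ w ∈ C, (n : ℝ) < ‖w - x‖ := by
    intro n
    by_contra! h
    exact hC ((Metric.isBounded_iff_subset_closedBall x).2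
      ⟨n, fun w hw => by simpa [dist_eq_norm] using h w hw⟩)
  choose w hwC hw using hfar
  have hpos : ∀ n, 0 < ‖w n - x‖ := fun n => (Nat.cast_nonneg n).trans_lt (hw n)
  set u : ℕ → E := fun n => ‖w n - x‖⁻¹ • (w n - x)
  have hu : ∀ n, u n ∈ Metric.sphere (0 : E) 1 := fun n => by
    simp [u, norm_smul, (hpos n).ne']
  obtain ⟨d, hd, φ, hφ, hlim⟩ := (isCompact_sphere (0 : E) 1).tendsto_subseq hu
  refine ⟨d, by simpa using hd, fun ρ hρ => ?_⟩
  refine hclosed.mem_of_tendsto (tendsto_const_nhds.add (hlim.const_smul ρ)) ?_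
  filter_upwards [eventually_ge_atTop ⌈ρ⌉₊] with n hn
  have hρn : ρ ≤ ‖w (φ n) - x‖ :=
    calc ρ ≤ ⌈ρ⌉₊ := Nat.le_ceil ρ
      _ ≤ φ n := by exact_mod_cast hn.trans hφ.le_apply
      _ ≤ ‖w (φ n) - x‖ := (hw _).le
  have hseg : x + ρ • u (φ n) = x + (ρ / ‖w (φ n) - x‖) • (w (φ n) - x) := by
    simp only [u, smul_smul, div_eq_mul_inv]
  rw [Function.comp_apply, hseg]
  exact hconv.add_smul_sub_mem hx (hwC _)
    ⟨div_nonneg hρ (norm_nonneg _), div_le_one_of_le₀ hρn (norm_nonneg _)⟩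

variable {E : Type*} [NormedAddCommGroup E] [InnerProductSpace ℝ E] [FiniteDimensional ℝ E]

theorem QuasiconvexOn.exists_forall_le_of_recession_mem {Φ : E → EReal}
    (hconv : QuasiconvexOn ℝ univ Φ) (hlsc : LowerSemicontinuous Φ) (L : Submodule ℝ E)
    (hL : ∀ v ∈ L, ∀ w, Φ (w + v) = Φ w) (x₀ : E)
    (hrec : ∀ x d, (∀ ρ : ℝ, 0 ≤ ρ → Φ (x + ρ • d) ≤ Φ x₀) → d ∈ L) :
    ∃ x, ∀ w, Φ x ≤ Φ w := by
  have hproj : ∀ w, w - L.starProjection w ∈ Lᗮ ∧ Φ (w - L.starProjection w) = Φ w := fun w =>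
    ⟨L.sub_starProjection_mem_orthogonal w, by
      rw [← hL _ (L.starProjection_apply_mem w), sub_add_cancel]⟩
  set K := (Lᗮ : Set E) ∩ {x | Φ x ≤ Φ x₀}
  have hKclosed : IsClosed K :=
    Lᗮ.closed_of_finiteDimensional.inter (hlsc.isClosed_preimage _)
  have hKbdd : IsBounded K := by
    by_contra hK
    have hKconv : Convex ℝ K := Lᗮ.convex.inter (by simpa using hconv (Φ x₀))
    obtain ⟨x, hx⟩ : K.Nonempty := ⟨_, (hproj x₀).1, (hproj x₀).2.le⟩
    obtain ⟨d, hd, hray⟩ := hKconv.exists_unit_ray_subset_of_not_isBounded hKclosed hK hx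
    have hdL : d ∈ L := hrec x d fun ρ hρ => (hray ρ hρ).2
    have hdL' : d ∈ Lᗮ := by simpa using Lᗮ.sub_mem (hray 1 zero_le_one).1 hx.1
    rw [(Submodule.disjoint_def.1 L.orthogonal_disjoint) d hdL hdL', norm_zero] at hd
    exact zero_ne_one hd
  obtain ⟨x, hxK, hmin⟩ := LowerSemicontinuousOn.exists_isMinOn (s := K)
    ⟨_, (hproj x₀).1, (hproj x₀).2.le⟩ (Metric.isCompact_of_isClosed_isBounded hKclosed hKbdd)
    (hlsc.lowerSemicontinuousOn K)
  refine ⟨x, fun w => ?_⟩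
  rw [← (hproj w).2]
  by_cases hw : Φ (w - L.starProjection w) ≤ Φ x₀
  · exact isMinOn_iff.1 hmin _ ⟨(hproj w).1, hw⟩
  · exact hxK.2.trans (not_le.1 hw).le

end Recession

section ConvexEReal

variable {E : Type*} [NormedAddCommGroup E] [InnerProductSpace ℝ E] {f : E → EReal}

theorem ProperConvexLsc.exists_eq_coe (hf : ProperConvexLsc f) {x : E} (hx : f x ≠ ⊤) :
    ∃ a : ℝ, f x = a :=
  ⟨_, (EReal.coe_toReal hx (hf.2.1 x)).symm⟩

theorem ProperConvexLsc.exists_eq_coe_of_add_le (hf : ProperConvexLsc f) {w : E} {b M : ℝ}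
    (h : f w + b ≤ M) : ∃ p : ℝ, f w = p ∧ p + b ≤ M := by
  obtain ⟨p, hp⟩ := hf.exists_eq_coe (x := w) fun htop => by
    rw [htop, EReal.top_add_coe, top_le_iff] at h
    exact EReal.coe_ne_top M h
  rw [hp, ← EReal.coe_add, EReal.coe_le_coe_iff] at h
  exact ⟨p, hp, h⟩

theorem ProperConvexLsc.le_add_smul_sub (hf : ProperConvexLsc f) {x y : E} {a b t : ℝ}
    (hx : f x = a) (hy : f y = b) (ht₀ : 0 ≤ t) (ht₁ : t ≤ 1) :
    f (x + t • (y - x)) ≤ ↑(a + t * (b - a)) := by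
  have h := hf.2.2.1 x y (1 - t) t (sub_nonneg.2 ht₁) ht₀ (by ring)
  rw [hx, hy, ← EReal.coe_mul, ← EReal.coe_mul, ← EReal.coe_add] at h
  convert h using 2 <;> first | module | ring

theorem ProperConvexLsc.add_smul_le_of_recession_nonpos (hf : ProperConvexLsc f)
    {frec : E → EReal} (hrec : IsRecessionFn f frec) {d : E} (hd : frec d ≤ 0) (x : E)
    {t : ℝ} (ht : 0 ≤ t) : f (x + t • d) ≤ f x := by
  by_cases hx : f x = ⊤
  · simp [hx]
  obtain ⟨a, ha⟩ := hf.exists_eq_coe hx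
  rcases ht.eq_or_lt with rfl | ht
  · simp
  -- otherwise the slope on `[0, t]` exceeds some `ε > frec d`, but slopes increase along the ray
  by_contra! h
  rw [ha] at h
  obtain ⟨q, haq, hq⟩ := EReal.exists_between_coe_real h
  have hε : (0 : ℝ) < (q - a) / t := div_pos (sub_pos.2 (EReal.coe_lt_coe_iff.1 haq)) ht
  have hslope : ∀ᶠ ρ : ℝ in atTop, (f (x + ρ • d) - f x) * ((ρ⁻¹ : ℝ) : EReal) < ↑((q - a) / t) :=
    (hrec x hx d).eventually (gt_mem_nhds (hd.trans_lt (EReal.coe_pos.2 hε)))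
  obtain ⟨ρ, hρ, htρ⟩ := (hslope.and (eventually_ge_atTop t)).exists
  have hρ₀ : 0 < ρ := ht.trans_le htρ
  obtain ⟨p, hp⟩ := hf.exists_eq_coe (x := x + ρ • d) fun htop => by
    rw [htop, ha, EReal.top_sub_coe, EReal.top_mul_coe_of_pos (inv_pos.2 hρ₀)] at hρ
    exact not_top_lt hρ
  rw [hp, ha, ← EReal.coe_sub, ← EReal.coe_mul, EReal.coe_lt_coe_iff] at hρ
  have hconv := hf.le_add_smul_sub ha hp (div_nonneg ht.le hρ₀.le) ((div_le_one hρ₀).2 htρ)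
  rw [add_sub_cancel_left, smul_smul, div_mul_cancel₀ _ hρ₀.ne'] at hconv
  have hlt : a + t / ρ * (p - a) < q := by
    rw [lt_div_iff₀ ht] at hρ
    calc a + t / ρ * (p - a) = a + (p - a) * ρ⁻¹ * t := by ring
      _ < a + (q - a) := by linarith
      _ = q := by ring
  exact (hq.trans_le hconv).not_gt (EReal.coe_lt_coe_iff.2 hlt)

theorem IsRecessionFn.nonpos_of_le_on_ray {frec : E → EReal} (hrec : IsRecessionFn f frec)
    {x d : E} {a M : ℝ} (hx : f x = a) (hray : ∀ ρ : ℝ, 0 ≤ ρ → f (x + ρ • d) ≤ M) :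
    frec d ≤ 0 := by
  have hlim : Tendsto (fun ρ : ℝ => (((M - a) * ρ⁻¹ : ℝ) : EReal)) atTop (𝓝 ((0 : ℝ) : EReal)) :=
    (continuous_coe_real_ereal.tendsto 0).comp
      (by simpa using tendsto_inv_atTop_zero.const_mul (M - a))
  refine le_of_tendsto_of_tendsto (hrec x (hx ▸ EReal.coe_ne_top a) d) hlim ?_
  filter_upwards [eventually_gt_atTop 0] with ρ hρ
  rw [hx, EReal.coe_mul, EReal.coe_sub]
  exact mul_le_mul_of_nonneg_right (EReal.sub_le_sub (hray ρ hρ.le) le_rfl)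
    (EReal.coe_nonneg.2 (inv_nonneg.2 hρ.le))

theorem ProperConvexLsc.add_mul_sub_le_of_one_le (hf : ProperConvexLsc f) {x d : E} {a r p ρ : ℝ}
    (hx : f x = a) (hd : f (x + d) = r) (hρd : f (x + ρ • d) = p) (hρ : 1 ≤ ρ) :
    a + ρ * (r - a) ≤ p := by
  have hρ₀ : 0 < ρ := one_pos.trans_le hρ
  have h := hf.le_add_smul_sub hx hρd (inv_nonneg.2 hρ₀.le) (inv_le_one_of_one_le₀ hρ)
  rw [add_sub_cancel_left, smul_smul, inv_mul_cancel₀ hρ₀.ne', one_smul, hd,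
    EReal.coe_le_coe_iff] at h
  have := mul_le_mul_of_nonneg_left h hρ₀.le
  rw [mul_add, ← mul_assoc, mul_inv_cancel₀ hρ₀.ne'] at this
  linarith

theorem ProperConvexLsc.quasiconvexOn_add_coe (hf : ProperConvexLsc f) {ψ : E → ℝ}
    (hψ : ConvexOn ℝ univ ψ) : QuasiconvexOn ℝ univ fun w => f w + ψ w := by
  refine quasiconvexOn_iff_le_max.2 ⟨convex_univ, fun u _ v _ a b ha hb hab => ?_⟩
  by_cases hu : f u = ⊤
  · simp [hu]
  by_cases hv : f v = ⊤
  · simp [hv]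
  obtain ⟨fu, hfu⟩ := hf.exists_eq_coe hu
  obtain ⟨fv, hfv⟩ := hf.exists_eq_coe hv
  have hfuv := hf.2.2.1 u v a b ha hb hab
  rw [hfu, hfv, ← EReal.coe_mul, ← EReal.coe_mul, ← EReal.coe_add] at hfuv
  have hψuv := hψ.2 (mem_univ u) (mem_univ v) ha hb hab
  simp only [smul_eq_mul] at hψuv
  calc f (a • u + b • v) + ψ (a • u + b • v)
      ≤ ↑(a * fu + b * fv) + ↑(a * ψ u + b * ψ v) := add_le_add hfuv (EReal.coe_le_coe hψuv)
    _ = ↑(a * (fu + ψ u) + b * (fv + ψ v)) := by rw [← EReal.coe_add]; ring_nf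
    _ ≤ ↑(max (fu + ψ u) (fv + ψ v)) :=
        EReal.coe_le_coe (Convex.combo_le_max (fu + ψ u) (fv + ψ v) ha hb hab)
    _ = max (f u + ψ u) (f v + ψ v) := by rw [hfu, hfv]; rfl

end ConvexEReal

theorem LowerSemicontinuous.add_coe {α : Type*} [TopologicalSpace α] {f : α → EReal}
    (hf : LowerSemicontinuous f) {ψ : α → ℝ} (hψ : Continuous ψ) :
    LowerSemicontinuous fun w => f w + ψ w :=
  hf.add' (continuous_coe_real_ereal.comp hψ).lowerSemicontinuous fun _ =>
    EReal.continuousAt_add (Or.inr (EReal.coe_ne_bot _)) (Or.inr (EReal.coe_ne_top _))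

theorem nonpos_of_forall_mul_sq_le {κ m k : ℝ} (h : ∀ ρ : ℝ, 1 ≤ ρ → κ * ρ ^ 2 ≤ m * ρ + k) :
    κ ≤ 0 := by
  by_contra! hκ
  set ρ := max 1 ((|m| + |k| + 1) / κ)
  have hρ : 1 ≤ ρ := le_max_left _ _
  have hκρ : |m| + |k| + 1 ≤ κ * ρ := by
    rw [← div_le_iff₀' hκ]
    exact le_max_right _ _
  have hmρ : m * ρ ≤ |m| * ρ := mul_le_mul_of_nonneg_right (le_abs_self m) (by linarith)
  have hgrow := mul_le_mul_of_nonneg_right hκρ (by linarith : (0 : ℝ) ≤ ρ)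
  nlinarith [h ρ hρ, le_abs_self k, abs_nonneg k]

theorem LinearMap.IsSymmetric.apply_eq_zero_of_inner_self_eq_zero {E : Type*}
    [NormedAddCommGroup E] [InnerProductSpace ℝ E] {S : E →ₗ[ℝ] E} (hS : S.IsSymmetric)
    (hpsd : ∀ w, 0 ≤ ⟪w, S w⟫) {d : E} (hd : ⟪d, S d⟫ = 0) : S d = 0 := by
  set a := ‖S d‖ ^ 2
  set C := ⟪S d, S (S d)⟫
  have hC : 0 ≤ C := hpsd (S d)
  -- the form is nonnegative along the line `d - t • S d`, whose slope at `t = 0` is `-2 a`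
  have hline : ∀ t : ℝ, 0 ≤ -2 * t * a + t ^ 2 * C := fun t => by
    have h := hpsd (d - t • S d)
    simp only [map_sub, map_smul, inner_sub_left, inner_sub_right, real_inner_smul_left,
      real_inner_smul_right, hd, ← hS d (S d), real_inner_self_eq_norm_sq] at h
    linarith
  have ha : a = 0 := by
    have h := hline (a / (C + 1))
    have hC1 : 0 < C + 1 := by linarith
    have : a ^ 2 * (C + 2) ≤ 0 := by
      field_simp at h
      nlinarith
    nlinarith [sq_nonneg a]
  simpa [a] using ha

section ConstancySpace

variable {E β : Type*} [AddCommGroup E] [Module ℝ E]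

def constancySpace [Preorder β] (f : E → β) : Submodule ℝ E where
  carrier := {d | ∀ t : ℝ, ∀ w, f (w + t • d) ≤ f w}
  add_mem' {d e} hd he t w := by
    rw [smul_add, ← add_assoc]
    exact (he t _).trans (hd t w)
  zero_mem' := by simp
  smul_mem' c d hd t w := by
    rw [smul_smul]
    exact hd _ w

theorem apply_add_of_mem_constancySpace [PartialOrder β] {f : E → β} {d : E}
    (hd : d ∈ constancySpace f) (w : E) : f (w + d) = f w := by
  refine le_antisymm (by simpa using hd 1 w) ?_
  simpa using hd (-1) (w + d)

end ConstancySpace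

theorem ProperConvexLsc.mem_constancySpace {E : Type*} [NormedAddCommGroup E]
    [InnerProductSpace ℝ E] {f : E → EReal} (hf : ProperConvexLsc f) {frec : E → EReal}
    (hrec : IsRecessionFn f frec) {d : E} (hd : frec d ≤ 0) (hd' : frec (-d) ≤ 0) :
    d ∈ constancySpace f := by
  intro t w
  rcases le_or_gt 0 t with ht | ht
  · exact hf.add_smul_le_of_recession_nonpos hrec hd w ht
  · rw [← neg_smul_neg]
    exact hf.add_smul_le_of_recession_nonpos hrec hd' w (neg_nonneg.2 ht.le)

theorem convexOn_univ_of_forall_add_smul_eq {E : Type*} [AddCommGroup E] [Module ℝ E]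
    {ψ : E → ℝ}
    (h : ∀ x d, ∃ ℓ κ : ℝ, 0 ≤ κ ∧ ∀ ρ : ℝ, ψ (x + ρ • d) = ψ x + ρ * ℓ + ρ ^ 2 * κ) :
    ConvexOn ℝ univ ψ := by
  refine ⟨convex_univ, fun u _ v _ a b ha hb hab => ?_⟩
  obtain rfl : a = 1 - b := eq_sub_of_add_eq hab
  obtain ⟨ℓ, κ, hκ, hline⟩ := h u (v - u)
  have hv := hline 1
  rw [one_smul, add_sub_cancel] at hv
  have hcomb : (1 - b) • u + b • v = u + b • (v - u) := by module
  rw [hcomb, hline, hv, smul_eq_mul, smul_eq_mul]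
  nlinarith [mul_nonneg (mul_nonneg ha hb) hκ]

open LinearMap (adjoint)

section YSubproblem

variable (g : Z → EReal) (A : X →ₗ[ℝ] Y) (B : X →ₗ[ℝ] Z) (c : X) (σ : ℝ) (S : Y →ₗ[ℝ] Y)
  (x' : X) (y' : Y) (z' : Z)

def ysubSmooth (w : Y) : ℝ :=
  (g z').toReal + ⟪x', adjoint A w + adjoint B z' - c⟫
    + σ / 2 * ‖adjoint A w + adjoint B z' - c‖ ^ 2 + ⟪w - y', S (w - y')⟫ / 2

variable {g A B c σ S x' y' z'}

theorem ysub_eq_add_ysubSmooth (f : Y → EReal) (hz' : g z' ≠ ⊤) (hz'' : g z' ≠ ⊥) (w : Y) :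
    ysub f g A B c σ S x' y' z' w = f w + ysubSmooth g A B c σ S x' y' z' w := by
  rw [ysub, augL, ysubSmooth, ← EReal.coe_toReal hz' hz'']
  simp only [EReal.coe_add, EReal.toReal_coe, add_assoc]

theorem continuous_ysubSmooth : Continuous (ysubSmooth g A B c σ S x' y' z') := by
  unfold ysubSmooth
  fun_prop

theorem ysubSmooth_add_smul (hS : S.IsSymmetric) (x d : Y) : ∃ ℓ : ℝ, ∀ ρ : ℝ,
    ysubSmooth g A B c σ S x' y' z' (x + ρ • d) = ysubSmooth g A B c σ S x' y' z' x + ρ * ℓ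
      + ρ ^ 2 * (σ / 2 * ‖adjoint A d‖ ^ 2 + ⟪d, S d⟫ / 2) := by
  set u := adjoint A x + adjoint B z' - c
  refine ⟨⟪x', adjoint A d⟫ + σ * ⟪u, adjoint A d⟫ + ⟪x - y', S d⟫, fun ρ => ?_⟩
  have hu : adjoint A (x + ρ • d) + adjoint B z' - c = u + ρ • adjoint A d := by
    simp only [u, map_add, map_smul]
    abel
  have hsub : x + ρ • d - y' = (x - y') + ρ • d := by abel
  have hsym : ⟪d, S (x - y')⟫ = ⟪x - y', S d⟫ := by rw [← hS, real_inner_comm]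
  rw [ysubSmooth, ysubSmooth, hu, hsub]
  simp only [map_add, map_smul, inner_add_left, inner_add_right,
    real_inner_smul_left, real_inner_smul_right, norm_add_sq_real, norm_smul, hsym,
    Real.norm_eq_abs, mul_pow, sq_abs]
  ring

theorem ysubSmooth_add_of_mem_ker (hS : S.IsSymmetric) {v : Y} (hAv : adjoint A v = 0)
    (hSv : S v = 0) (w : Y) :
    ysubSmooth g A B c σ S x' y' z' (w + v) = ysubSmooth g A B c σ S x' y' z' w := by
  have hsub : w + v - y' = (w - y') + v := by abel
  have hSv' : ⟪v, S (w - y')⟫ = 0 := by rw [← hS, hSv, inner_zero_left]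
  simp only [ysubSmooth, hsub, map_add, hAv, hSv, hSv', add_zero, inner_add_left]

theorem convexOn_ysubSmooth (hσ : 0 ≤ σ) (hS : S.IsSymmetric) (hpsd : ∀ w, 0 ≤ ⟪w, S w⟫) :
    ConvexOn ℝ univ (ysubSmooth g A B c σ S x' y' z') :=
  convexOn_univ_of_forall_add_smul_eq fun x d => (ysubSmooth_add_smul hS x d).imp fun _ hℓ =>
    ⟨_, add_nonneg (by positivity) (div_nonneg (hpsd d) zero_le_two), hℓ⟩

end YSubproblem

section YSubproblemRecession

variable {f : Y → EReal} {g : Z → EReal} {A : X →ₗ[ℝ] Y} {B : X →ₗ[ℝ] Z} {c : X} {σ : ℝ}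
  {S : Y →ₗ[ℝ] Y} {x' : X} {y' : Y} {z' : Z}

theorem adjoint_apply_eq_zero_and_apply_eq_zero_of_bounded_on_ray (hf : ProperConvexLsc f)
    (hσ : 0 < σ) (hS : S.IsSymmetric) (hpsd : ∀ w, 0 ≤ ⟪w, S w⟫) {x d : Y} {M : ℝ}
    (hray : ∀ ρ : ℝ, 0 ≤ ρ →
      f (x + ρ • d) + ysubSmooth g A B c σ S x' y' z' (x + ρ • d) ≤ M) :
    adjoint A d = 0 ∧ S d = 0 := by
  set ψ := ysubSmooth g A B c σ S x' y' z'
  obtain ⟨ℓ, hℓ⟩ : ∃ ℓ : ℝ, ∀ ρ : ℝ, ψ (x + ρ • d) = ψ x + ρ * ℓ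
      + ρ ^ 2 * (σ / 2 * ‖adjoint A d‖ ^ 2 + ⟪d, S d⟫ / 2) := ysubSmooth_add_smul hS x d
  obtain ⟨a, ha, -⟩ := hf.exists_eq_coe_of_add_le (by simpa using hray 0 le_rfl)
  obtain ⟨r, hr, -⟩ := hf.exists_eq_coe_of_add_le (by simpa using hray 1 zero_le_one)
  -- `f` grows at least linearly along the ray while `ψ` grows quadratically
  have hκ : σ / 2 * ‖adjoint A d‖ ^ 2 + ⟪d, S d⟫ / 2 ≤ 0 := by
    refine nonpos_of_forall_mul_sq_le (m := a - r - ℓ) (k := M - ψ x - a) fun ρ hρ => ?_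
    obtain ⟨p, hp, hpM⟩ := hf.exists_eq_coe_of_add_le (hray ρ (by linarith))
    have := hf.add_mul_sub_le_of_one_le ha hr hp hρ
    rw [hℓ] at hpM
    linarith
  have hSd : ⟪d, S d⟫ = 0 := by nlinarith [hpsd d, sq_nonneg ‖adjoint A d‖]
  have hAd : ‖adjoint A d‖ ^ 2 = 0 := by nlinarith [hpsd d, sq_nonneg ‖adjoint A d‖]
  exact ⟨by simpa using hAd, hS.apply_eq_zero_of_inner_self_eq_zero hpsd hSd⟩

theorem mem_lineality_of_bounded_on_ray (hf : ProperConvexLsc f) (hσ : 0 < σ)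
    (hS : S.IsSymmetric) (hpsd : ∀ w, 0 ≤ ⟪w, S w⟫) {frec : Y → EReal}
    (hfrec : IsRecessionFn f frec)
    (hass : ∀ w : Y, adjoint A w = 0 → S w = 0 →
      ¬(frec w = 0 ∧ frec (-w) = 0) → 0 < frec w) {x d : Y} {M : ℝ}
    (hray : ∀ ρ : ℝ, 0 ≤ ρ →
      f (x + ρ • d) + ysubSmooth g A B c σ S x' y' z' (x + ρ • d) ≤ M) :
    d ∈ LinearMap.ker (adjoint A) ⊓ LinearMap.ker S ⊓ constancySpace f := by
  obtain ⟨hAd, hSd⟩ :=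
    adjoint_apply_eq_zero_and_apply_eq_zero_of_bounded_on_ray hf hσ hS hpsd hray
  have hbound : ∀ ρ : ℝ, 0 ≤ ρ → f (x + ρ • d) ≤ ↑(M - ysubSmooth g A B c σ S x' y' z' x) :=
    fun ρ hρ => by
      obtain ⟨p, hp, hpM⟩ := hf.exists_eq_coe_of_add_le (hray ρ hρ)
      rw [ysubSmooth_add_of_mem_ker hS (v := ρ • d) (by simp [hAd]) (by simp [hSd])] at hpM
      rw [hp]
      exact EReal.coe_le_coe (by linarith)
  obtain ⟨a, ha, -⟩ := hf.exists_eq_coe_of_add_le (by simpa using hray 0 le_rfl)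
  have hrec : frec d ≤ 0 := hfrec.nonpos_of_le_on_ray ha hbound
  have hzero : frec d = 0 ∧ frec (-d) = 0 := by
    by_contra h
    exact (hass d hAd hSd h).not_ge hrec
  exact ⟨⟨hAd, hSd⟩, hf.mem_constancySpace hfrec hrec hzero.2.le⟩

end YSubproblemRecession

theorem stmt_1_general
    (f : Y → EReal) (g : Z → EReal)
    (hf : ProperConvexLsc f) (hg : ProperConvexLsc g)
    (A : X →ₗ[ℝ] Y) (B : X →ₗ[ℝ] Z) (c : X)
    (σ : ℝ) (hσ : 0 < σ)
    (S : Y →ₗ[ℝ] Y) (hSsym : S.IsSymmetric) (hSpsd : ∀ w : Y, 0 ≤ ⟪w, S w⟫)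
    (x' : X) (y' : Y) (z' : Z) (hy' : f y' ≠ ⊤) (hz' : g z' ≠ ⊤)
    (frec : Y → EReal) (hfrec : IsRecessionFn f frec)
    (hass : ∀ w : Y, (LinearMap.adjoint A) w = 0 → S w = 0 →
      ¬(frec w = 0 ∧ frec (-w) = 0) → 0 < frec w) :
    ∃ yhat : Y, f yhat ≠ ⊤ ∧
      ∀ w : Y, ysub f g A B c σ S x' y' z' yhat ≤ ysub f g A B c σ S x' y' z' w := by
  simp_rw [ysub_eq_add_ysubSmooth f hz' (hg.2.1 z')]
  obtain ⟨a, ha⟩ := hf.exists_eq_coe hy'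
  have hinv : ∀ v ∈ LinearMap.ker (adjoint A) ⊓ LinearMap.ker S ⊓ constancySpace f, ∀ w,
      f (w + v) + ysubSmooth g A B c σ S x' y' z' (w + v)
        = f w + ysubSmooth g A B c σ S x' y' z' w := by
    rintro v ⟨⟨hAv, hSv⟩, hfv⟩ w
    rw [apply_add_of_mem_constancySpace hfv,
      ysubSmooth_add_of_mem_ker hSsym (LinearMap.mem_ker.1 hAv) (LinearMap.mem_ker.1 hSv)]
  obtain ⟨yhat, hmin⟩ := (hf.quasiconvexOn_add_coe (convexOn_ysubSmooth hσ.le hSsym hSpsd))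
    |>.exists_forall_le_of_recession_mem (hf.2.2.2.add_coe continuous_ysubSmooth) _ hinv y'
      fun x d hray => mem_lineality_of_bounded_on_ray hf hσ hSsym hSpsd hfrec hass
        (M := a + ysubSmooth g A B c σ S x' y' z' y')
        (by simpa only [ha, ← EReal.coe_add] using hray)
  refine ⟨yhat, fun htop => ?_, hmin⟩
  have h := hmin y'
  rw [htop, EReal.top_add_coe, ha, ← EReal.coe_add, top_le_iff] at h
  exact EReal.coe_ne_top _ h

/-- **Proposition 1(a), y-part.**  If `f0⁺(w) > 0` for every `w` with `A* w = 0`, `S w = 0`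
and not (`f0⁺(w) = 0` and `f0⁺(-w) = 0`), then the `y`-subproblem is solvable. -/
theorem stmt_1
    (f : Y → EReal) (g : Z → EReal)
    (hf : ProperConvexLsc f) (hg : ProperConvexLsc g)
    (A : X →ₗ[ℝ] Y) (B : X →ₗ[ℝ] Z) (c : X)
    (σ : ℝ) (hσ : 0 < σ)
    (S : Y →ₗ[ℝ] Y) (hSsym : S.IsSymmetric) (hSpsd : ∀ w : Y, 0 ≤ ⟪w, S w⟫)
    (T : Z →ₗ[ℝ] Z) (hTsym : T.IsSymmetric) (hTpsd : ∀ w : Z, 0 ≤ ⟪w, T w⟫)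
    (x' : X) (y' : Y) (z' : Z) (hy' : f y' ≠ ⊤) (hz' : g z' ≠ ⊤)
    (frec : Y → EReal) (hfrec : IsRecessionFn f frec)
    (hass : ∀ w : Y, (LinearMap.adjoint A) w = 0 → S w = 0 →
      ¬(frec w = 0 ∧ frec (-w) = 0) → 0 < frec w) :
    ∃ yhat : Y, f yhat ≠ ⊤ ∧
      ∀ w : Y, ysub f g A B c σ S x' y' z' yhat ≤ ysub f g A B c σ S x' y' z' w :=
  stmt_1_general f g hf hg A B c σ hσ S hSsym hSpsd x' y' z' hy' hz' frec hfrec hass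
end
end

section
/- Suppose f is quadratic: f(y) = (1/2)⟨y, Q y⟩ + ⟨a, y⟩ + α for a self-adjoint positive semidefinite linear operator Q : Y → Y, a ∈ Y, α ∈ ℝ. Then (i) f0⁺(y) = ⟨a, y⟩ if Q y = 0 and f0⁺(y) = +∞ if Q y ≠ 0; and (ii) if the primal problem (P) has an optimal solution, then f0⁺(y) > 0 for every y ∈ Y such that A*y = 0, S y = 0, and not (f0⁺(y) = 0 and f0⁺(−y) = 0). -/
open scoped RealInnerProductSpace
open Filter Bornology

noncomputable section

variable {X Y Z : Type*}
variable [NormedAddCommGroup X] [InnerProductSpace ℝ X] [FiniteDimensional ℝ X]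
variable [NormedAddCommGroup Y] [InnerProductSpace ℝ Y] [FiniteDimensional ℝ Y]
variable [NormedAddCommGroup Z] [InnerProductSpace ℝ Z] [FiniteDimensional ℝ Z]

/-!
Along a ray, `ρ ↦ f(ρ w)` is the real quadratic `ρ² ⟨w, Q w⟩ / 2 + ρ ⟨a, w⟩ + α`, so the
recession quotient at `0` is `ρ ⟨w, Q w⟩ / 2 + ⟨a, w⟩`: it is constant when `Q w = 0`, and
tends to `+∞` otherwise, since for a positive semidefinite `Q` the form `⟨w, Q w⟩` vanishes
only on `ker Q`. For (ii), a direction `w` with `Q w = 0` and `A* w = 0` moves an optimal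
solution along a line of feasible points on which the objective is affine with slope
`⟨a, w⟩`; optimality forces `⟨a, w⟩ = 0`, i.e. `f0⁺(w) = f0⁺(-w) = 0`.
-/

section Quadratic

variable {E : Type*} [NormedAddCommGroup E] [InnerProductSpace ℝ E]

namespace LinearMap

theorem IsPositive.apply_eq_zero_of_inner_eq_zero {T : E →ₗ[ℝ] E} (hT : T.IsPositive)
    {x : E} (hx : ⟪x, T x⟫ = 0) : T x = 0 := by
  have orthogonal : ∀ v, ⟪v, T x⟫ = 0 := by
    intro v
    -- `t ↦ ⟪x + t v, T (x + t v)⟫` is a nonnegative quadratic vanishing at `t = 0`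
    have hquad : ∀ t : ℝ, 0 ≤ ⟪v, T v⟫ * (t * t) + 2 * ⟪v, T x⟫ * t + 0 := by
      intro t
      have hxv : ⟪x, T v⟫ = ⟪v, T x⟫ := by rw [← hT.isSymmetric, real_inner_comm]
      have := hT.inner_nonneg_right (x + t • v)
      simp only [map_add, map_smul, inner_add_left, inner_add_right, real_inner_smul_left,
        real_inner_smul_right, hx, hxv] at this
      linarith
    have := discrim_le_zero hquad
    rw [discrim] at this
    nlinarith [sq_nonneg ⟪v, T x⟫]
  exact inner_self_eq_zero.mp (orthogonal (T x))

theorem IsSymmetric.inner_add_smul_apply_add_smul {T : E →ₗ[ℝ] E} (hT : T.IsSymmetric)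
    {w : E} (hw : T w = 0) (v : E) (t : ℝ) :
    ⟪v + t • w, T (v + t • w)⟫ = ⟪v, T v⟫ := by
  have hwv : ⟪w, T v⟫ = 0 := by rw [← hT, hw, inner_zero_left]
  simp only [map_add, map_smul, hw, smul_zero, add_zero, inner_add_left, real_inner_smul_left,
    hwv, mul_zero]

end LinearMap

variable {f : E → EReal} {Q : E →ₗ[ℝ] E} {a : E} {α : ℝ}

theorem recessionQuotient_quadratic
    (hfq : ∀ w : E, f w = ((⟪w, Q w⟫ / 2 + ⟪a, w⟫ + α : ℝ) : EReal)) (w : E) {ρ : ℝ}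
    (hρ : ρ ≠ 0) :
    (f (0 + ρ • w) - f 0) * ((ρ⁻¹ : ℝ) : EReal) = ((ρ * (⟪w, Q w⟫ / 2) + ⟪a, w⟫ : ℝ) : EReal) := by
  rw [hfq, hfq, zero_add, ← EReal.coe_sub, ← EReal.coe_mul, EReal.coe_eq_coe_iff]
  simp only [map_smul, map_zero, inner_zero_right, real_inner_smul_left,
    real_inner_smul_right]
  field_simp
  ring

theorem IsRecessionFn.eq_of_tendsto_quadratic {frec : E → EReal} (hfrec : IsRecessionFn f frec)
    (hfq : ∀ w : E, f w = ((⟪w, Q w⟫ / 2 + ⟪a, w⟫ + α : ℝ) : EReal)) {w : E} {L : EReal}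
    (hL : Tendsto (fun ρ : ℝ => ((ρ * (⟪w, Q w⟫ / 2) + ⟪a, w⟫ : ℝ) : EReal)) atTop (nhds L)) :
    frec w = L := by
  have hf0 : f 0 ≠ ⊤ := by rw [hfq]; exact EReal.coe_ne_top _
  refine tendsto_nhds_unique (hfrec 0 hf0 w) (hL.congr' ?_)
  filter_upwards [eventually_ne_atTop 0] with ρ hρ
  exact (recessionQuotient_quadratic hfq w hρ).symm

theorem IsRecessionFn.eq_inner_of_quadratic {frec : E → EReal} (hfrec : IsRecessionFn f frec)
    (hfq : ∀ w : E, f w = ((⟪w, Q w⟫ / 2 + ⟪a, w⟫ + α : ℝ) : EReal)) {w : E} (hw : Q w = 0) :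
    frec w = ((⟪a, w⟫ : ℝ) : EReal) :=
  hfrec.eq_of_tendsto_quadratic hfq <| by simp [hw]

theorem IsRecessionFn.eq_top_of_quadratic {frec : E → EReal} (hfrec : IsRecessionFn f frec)
    (hfq : ∀ w : E, f w = ((⟪w, Q w⟫ / 2 + ⟪a, w⟫ + α : ℝ) : EReal)) (hQ : Q.IsPositive)
    {w : E} (hw : Q w ≠ 0) : frec w = ⊤ := by
  have hpos : 0 < ⟪w, Q w⟫ :=
    (hQ.inner_nonneg_right w).lt_of_ne fun h => hw (hQ.apply_eq_zero_of_inner_eq_zero h.symm)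
  refine hfrec.eq_of_tendsto_quadratic hfq (EReal.tendsto_coe_atTop.comp ?_)
  exact tendsto_atTop_add_const_right _ _ (tendsto_id.atTop_mul_const (by linarith))

end Quadratic

theorem inner_eq_zero_of_isOptimal_quadratic {f : Y → EReal} {g : Z → EReal}
    (hg : ∀ z, g z ≠ ⊥) {A : X →ₗ[ℝ] Y} {B : X →ₗ[ℝ] Z} {c : X} {Q : Y →ₗ[ℝ] Y}
    (hQ : Q.IsSymmetric) {a : Y} {α : ℝ}
    (hfq : ∀ w : Y, f w = ((⟪w, Q w⟫ / 2 + ⟪a, w⟫ + α : ℝ) : EReal))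
    {p : Y × Z} (hgp : g p.2 ≠ ⊤)
    (hfeas : (LinearMap.adjoint A) p.1 + (LinearMap.adjoint B) p.2 = c)
    (hopt : ∀ q : Y × Z, (LinearMap.adjoint A) q.1 + (LinearMap.adjoint B) q.2 = c →
      f p.1 + g p.2 ≤ f q.1 + g q.2)
    {w : Y} (hAw : (LinearMap.adjoint A) w = 0) (hQw : Q w = 0) : ⟪a, w⟫ = 0 := by
  have slope_nonneg : ∀ t : ℝ, 0 ≤ t * ⟪a, w⟫ := by
    intro t
    have hle := hopt (p.1 + t • w, p.2) (by simp [hAw, hfeas])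
    lift g p.2 to ℝ using ⟨hgp, hg p.2⟩ with gp
    rw [hfq, hfq, hQ.inner_add_smul_apply_add_smul hQw, inner_add_right,
      real_inner_smul_right] at hle
    norm_cast at hle
    linarith
  linarith [slope_nonneg 1, slope_nonneg (-1)]

theorem stmt_6_general
    (f : Y → EReal) (g : Z → EReal)
    (hg : ProperConvexLsc g)
    (A : X →ₗ[ℝ] Y) (B : X →ₗ[ℝ] Z) (c : X)
    (S : Y →ₗ[ℝ] Y)
    (Q : Y →ₗ[ℝ] Y) (hQsym : Q.IsSymmetric) (hQpsd : ∀ w : Y, 0 ≤ ⟪w, Q w⟫)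
    (a : Y) (α : ℝ)
    (hfq : ∀ w : Y, f w = ((⟪w, Q w⟫ / 2 + ⟪a, w⟫ + α : ℝ) : EReal))
    (frec : Y → EReal) (hfrec : IsRecessionFn f frec) :
    ((∀ w : Y, Q w = 0 → frec w = ((⟪a, w⟫ : ℝ) : EReal)) ∧
      (∀ w : Y, Q w ≠ 0 → frec w = ⊤)) ∧
    ((∃ p : Y × Z, f p.1 ≠ ⊤ ∧ g p.2 ≠ ⊤ ∧
        (LinearMap.adjoint A) p.1 + (LinearMap.adjoint B) p.2 = c ∧
        ∀ q : Y × Z, (LinearMap.adjoint A) q.1 + (LinearMap.adjoint B) q.2 = c →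
          f p.1 + g p.2 ≤ f q.1 + g q.2) →
      ∀ w : Y, (LinearMap.adjoint A) w = 0 → S w = 0 →
        ¬(frec w = 0 ∧ frec (-w) = 0) → 0 < frec w) := by
  have hQ : Q.IsPositive :=
    Q.isPositive_iff.mpr ⟨hQsym, fun w => real_inner_comm w (Q w) ▸ hQpsd w⟩
  refine ⟨⟨fun w => hfrec.eq_inner_of_quadratic hfq, fun w => hfrec.eq_top_of_quadratic hfq hQ⟩, ?_⟩
  rintro ⟨p, -, hgp, hfeas, hopt⟩ w hAw - hnot_lineality
  by_cases hQw : Q w = 0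
  · have haw := inner_eq_zero_of_isOptimal_quadratic hg.2.1 hQsym hfq hgp hfeas hopt hAw hQw
    refine absurd ⟨?_, ?_⟩ hnot_lineality
    · rw [hfrec.eq_inner_of_quadratic hfq hQw, haw, EReal.coe_zero]
    · rw [hfrec.eq_inner_of_quadratic hfq (by rw [map_neg, hQw, neg_zero]), inner_neg_right, haw,
        neg_zero, EReal.coe_zero]
  · exact (hfrec.eq_top_of_quadratic hfq hQ hQw).symm ▸ EReal.zero_lt_top

/-- **Remark 1 (quadratic `f`).**  If `f(y) = (1/2)⟨y, Q y⟩ + ⟨a, y⟩ + α` with `Q`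
self-adjoint positive semidefinite, then (i) `f0⁺(y) = ⟨a, y⟩` when `Q y = 0` and
`f0⁺(y) = +∞` when `Q y ≠ 0`; and (ii) if the primal problem has an optimal solution then
`f0⁺(y) > 0` for every `y` with `A* y = 0`, `S y = 0` and not
(`f0⁺(y) = 0` and `f0⁺(-y) = 0`). -/
theorem stmt_6
    (f : Y → EReal) (g : Z → EReal)
    (hf : ProperConvexLsc f) (hg : ProperConvexLsc g)
    (A : X →ₗ[ℝ] Y) (B : X →ₗ[ℝ] Z) (c : X)
    (S : Y →ₗ[ℝ] Y) (hSsym : S.IsSymmetric) (hSpsd : ∀ w : Y, 0 ≤ ⟪w, S w⟫)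
    (Q : Y →ₗ[ℝ] Y) (hQsym : Q.IsSymmetric) (hQpsd : ∀ w : Y, 0 ≤ ⟪w, Q w⟫)
    (a : Y) (α : ℝ)
    (hfq : ∀ w : Y, f w = ((⟪w, Q w⟫ / 2 + ⟪a, w⟫ + α : ℝ) : EReal))
    (frec : Y → EReal) (hfrec : IsRecessionFn f frec) :
    ((∀ w : Y, Q w = 0 → frec w = ((⟪a, w⟫ : ℝ) : EReal)) ∧
      (∀ w : Y, Q w ≠ 0 → frec w = ⊤)) ∧
    ((∃ p : Y × Z, f p.1 ≠ ⊤ ∧ g p.2 ≠ ⊤ ∧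
        (LinearMap.adjoint A) p.1 + (LinearMap.adjoint B) p.2 = c ∧
        ∀ q : Y × Z, (LinearMap.adjoint A) q.1 + (LinearMap.adjoint B) q.2 = c →
          f p.1 + g p.2 ≤ f q.1 + g q.2) →
      ∀ w : Y, (LinearMap.adjoint A) w = 0 → S w = 0 →
        ¬(frec w = 0 ∧ frec (-w) = 0) → 0 < frec w) :=
  stmt_6_general f g hg A B c S Q hQsym hQpsd a α hfq frec hfrec
end
end

section
/- Let (x̄,ȳ,z̄) solve the KKT system and let {(x^k,y^k,z^k)}_{k≥0} be an infinite sequence generated by the sPADMM. Then for every k ≥ 1: Φ_k − Φ_{k+1} ≥ 2‖y_e^{k+1}‖²_{Σ_f} + 2‖z_e^{k+1}‖²_{Σ_g} + ‖y^{k+1} − y^k‖_S² + ‖z^{k+1} − z^k‖_T² + min(1, 1 − τ + τ^{−1})·σ‖A*y_e^{k+1} + B*z_e^{k+1}‖² + min(τ, 1 + τ − τ²)·σ‖B*(z^{k+1} − z^k)‖². -/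
/-!
Each sPADMM subproblem minimizes `f` (resp. `g`) plus a smooth quadratic, so first-order
optimality gives subgradients `-A(xᵏ + σ(A*yᵏ⁺¹ + B*zᵏ - c)) - S(yᵏ⁺¹ - yᵏ) ∈ ∂f(yᵏ⁺¹)` and
`-B(xᵏ + σrᵏ⁺¹) - T(zᵏ⁺¹ - zᵏ) ∈ ∂g(zᵏ⁺¹)`, where `rᵏ = A*y_eᵏ + B*z_eᵏ` is the residual.
Pairing them with the KKT subgradients through the `Σ_f`, `Σ_g` monotonicity, and expanding
`Ψ_k - Ψ_{k+1}` with the multiplier update `x_eᵏ⁺¹ = x_eᵏ + τσrᵏ⁺¹`, bounds `Φ_k - Φ_{k+1}` below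
by the claimed terms up to the cross term `⟪rᵏ⁺¹, B*Δz⟫`. Monotonicity of `∂g` between `zᵏ` and
`zᵏ⁺¹` trades it for `(1 - τ)⟪rᵏ, B*Δz⟫` and a `T`-term absorbed by `‖zᵏ - zᵏ⁻¹‖_T²`. What is
left is `(1 - τ)‖rᵏ - B*Δz‖²` if `τ ≤ 1` and `(τ - 1)/τ · ‖τB*Δz + rᵏ‖²` if `τ ≥ 1`.
-/

open scoped RealInnerProductSpace
open Filter Bornology

noncomputable section

variable {X Y Z : Type*}
variable [NormedAddCommGroup X] [InnerProductSpace ℝ X] [FiniteDimensional ℝ X]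
variable [NormedAddCommGroup Y] [InnerProductSpace ℝ Y] [FiniteDimensional ℝ Y]
variable [NormedAddCommGroup Z] [InnerProductSpace ℝ Z] [FiniteDimensional ℝ Z]

/-- The subdifferential `∂f(u)` of a function `f : E → ℝ ∪ {+∞}`. -/
def subdiff {E : Type*} [NormedAddCommGroup E] [InnerProductSpace ℝ E]
    (f : E → EReal) (u : E) : Set E :=
  {v | ∀ w : E, f u + ((⟪v, w - u⟫ : ℝ) : EReal) ≤ f w}

/-- `(x, y, z) : ℕ → X × Y × Z` is a sequence generated by the sPADMM scheme with
penalty parameter `σ`, step-length `τ` and proximal terms given by `S` and `T`,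
started from an initial point `(x⁰, y⁰, z⁰) ∈ X × dom f × dom g`. -/
def IsSPADMM (f : Y → EReal) (g : Z → EReal) (A : X →ₗ[ℝ] Y) (B : X →ₗ[ℝ] Z)
    (c : X) (σ τ : ℝ) (S : Y →ₗ[ℝ] Y) (T : Z →ₗ[ℝ] Z)
    (x : ℕ → X) (y : ℕ → Y) (z : ℕ → Z) : Prop :=
  f (y 0) ≠ ⊤ ∧ g (z 0) ≠ ⊤ ∧
    (∀ k : ℕ, ∀ w : Y,
      ysub f g A B c σ S (x k) (y k) (z k) (y (k + 1))
        ≤ ysub f g A B c σ S (x k) (y k) (z k) w) ∧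
    (∀ k : ℕ, ∀ w : Z,
      zsub f g A B c σ T (x k) (y (k + 1)) (z k) (z (k + 1))
        ≤ zsub f g A B c σ T (x k) (y (k + 1)) (z k) w) ∧
    (∀ k : ℕ, x (k + 1) = x k + (τ * σ) •
      ((LinearMap.adjoint A) (y (k + 1)) + (LinearMap.adjoint B) (z (k + 1)) - c))

/-- `(x̄, ȳ, z̄)` solves the KKT system:
`-A x̄ ∈ ∂f(ȳ)`, `-B x̄ ∈ ∂g(z̄)` and `A* ȳ + B* z̄ = c`. -/
def IsKKT (f : Y → EReal) (g : Z → EReal) (A : X →ₗ[ℝ] Y) (B : X →ₗ[ℝ] Z)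
    (c : X) (xb : X) (yb : Y) (zb : Z) : Prop :=
  -(A xb) ∈ subdiff f yb ∧ -(B xb) ∈ subdiff g zb ∧
    (LinearMap.adjoint A) yb + (LinearMap.adjoint B) zb = c

/-- Condition (C): either `0 < τ < (1+√5)/2`, or `τ ≥ (1+√5)/2` and
`Σ_k ‖x^{k+1} - x^k‖² < ∞`. -/
def CondC {X : Type*} [NormedAddCommGroup X] (τ : ℝ) (x : ℕ → X) : Prop :=
  (0 < τ ∧ τ < (1 + Real.sqrt 5) / 2) ∨
    ((1 + Real.sqrt 5) / 2 ≤ τ ∧ Summable fun k : ℕ => ‖x (k + 1) - x k‖ ^ 2)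

/-- `Sf` satisfies `⟨v - v', u - u'⟩ ≥ ‖u - u'‖²_{Sf}` for all `v ∈ ∂f(u)`, `v' ∈ ∂f(u')`. -/
def SubMono {E : Type*} [NormedAddCommGroup E] [InnerProductSpace ℝ E]
    (f : E → EReal) (Sf : E →ₗ[ℝ] E) : Prop :=
  ∀ u u' v v' : E, v ∈ subdiff f u → v' ∈ subdiff f u' →
    ⟪u - u', Sf (u - u')⟫ ≤ ⟪v - v', u - u'⟫

/-- `Ψ_k := (1/(τσ))‖x^k - x̄‖² + ‖y^k - ȳ‖_S² + ‖z^k - z̄‖²_{T + σBB*}`. -/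
def PsiSeq (B : X →ₗ[ℝ] Z) (σ τ : ℝ) (S : Y →ₗ[ℝ] Y) (T : Z →ₗ[ℝ] Z)
    (x : ℕ → X) (y : ℕ → Y) (z : ℕ → Z) (xb : X) (yb : Y) (zb : Z) (k : ℕ) : ℝ :=
  1 / (τ * σ) * ‖x k - xb‖ ^ 2 + ⟪y k - yb, S (y k - yb)⟫
    + (⟪z k - zb, T (z k - zb)⟫ + σ * ‖(LinearMap.adjoint B) (z k - zb)‖ ^ 2)

/-- `Φ_k := Ψ_k + ‖z^k - z^{k-1}‖_T² + max(1-τ, 1-τ⁻¹) σ ‖A* y_e^k + B* z_e^k‖²`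
(with the convention `z^{-1} = z⁰`, realized here by truncated subtraction `k - 1`). -/
def PhiSeq (A : X →ₗ[ℝ] Y) (B : X →ₗ[ℝ] Z) (σ τ : ℝ) (S : Y →ₗ[ℝ] Y) (T : Z →ₗ[ℝ] Z)
    (x : ℕ → X) (y : ℕ → Y) (z : ℕ → Z) (xb : X) (yb : Y) (zb : Z) (k : ℕ) : ℝ :=
  PsiSeq B σ τ S T x y z xb yb zb k
    + ⟪z k - z (k - 1), T (z k - z (k - 1))⟫
    + max (1 - τ) (1 - τ⁻¹) * σ *
        ‖(LinearMap.adjoint A) (y k - yb) + (LinearMap.adjoint B) (z k - zb)‖ ^ 2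

section RealInnerProduct

open Topology

lemma le_of_forall_le_add_mul {a b C : ℝ} (h : ∀ t ∈ Set.Ioc (0 : ℝ) 1, a ≤ b + t * C) :
    a ≤ b := by
  have hlim : Tendsto (fun t : ℝ => b + t * C) (𝓝[>] 0) (𝓝 b) := by
    have := (by fun_prop : Continuous fun t : ℝ => b + t * C).tendsto 0
    simpa using this.mono_left nhdsWithin_le_nhds
  exact ge_of_tendsto hlim (eventually_of_mem (Ioc_mem_nhdsGT one_pos) h)

variable {E : Type*}

lemma ne_top_of_forall_le_add {f : E → EReal} (hf : ∃ w, f w ≠ ⊤) {q : E → ℝ} {u : E}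
    (hmin : ∀ w, f u + (q u : EReal) ≤ f w + q w) : f u ≠ ⊤ := by
  obtain ⟨w, hw⟩ := hf
  intro hu
  have := hmin w
  rw [hu, EReal.top_add_coe, top_le_iff] at this
  exact EReal.add_ne_top hw (EReal.coe_ne_top _) this

variable [NormedAddCommGroup E] [InnerProductSpace ℝ E]

/-- `hq` says that `G` is the derivative of `q` at `u` along segments, up to a quadratic
remainder. -/
lemma neg_mem_subdiff_of_forall_le_add {f : E → EReal}
    (hconv : ∀ u v : E, ∀ a b : ℝ, 0 ≤ a → 0 ≤ b → a + b = 1 →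
      f (a • u + b • v) ≤ (a : EReal) * f u + (b : EReal) * f v)
    (hbot : ∀ u, f u ≠ ⊥) {q C : E → ℝ} {G u : E} (hu : f u ≠ ⊤)
    (hq : ∀ w, ∀ t ∈ Set.Ioc (0 : ℝ) 1,
      q (u + t • (w - u)) ≤ q u + t * ⟪G, w - u⟫ + t ^ 2 * C w)
    (hmin : ∀ w, f u + (q u : EReal) ≤ f w + q w) :
    -G ∈ subdiff f u := by
  intro w
  by_cases hw : f w = ⊤
  · simp [hw]
  lift f u to ℝ using ⟨hu, hbot u⟩ with fu hfu
  lift f w to ℝ using ⟨hw, hbot w⟩ with fw hfw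
  rw [inner_neg_left, ← EReal.coe_add, EReal.coe_le_coe_iff]
  suffices ∀ t ∈ Set.Ioc (0 : ℝ) 1, fu ≤ fw + ⟪G, w - u⟫ + t * C w by
    linarith [le_of_forall_le_add_mul this]
  rintro t ⟨ht, ht1⟩
  have hconv_t : f (u + t • (w - u)) ≤ (((1 - t) * fu + t * fw : ℝ) : EReal) := by
    have hseg : u + t • (w - u) = (1 - t) • u + t • w := by
      rw [smul_sub, sub_smul, one_smul]; abel
    rw [hseg]
    refine (hconv u w (1 - t) t (by linarith) ht.le (by ring)).trans_eq ?_
    rw [← hfu, ← hfw]; norm_cast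
  have h := (hmin (u + t • (w - u))).trans
    (add_le_add hconv_t (EReal.coe_le_coe_iff.mpr (hq w t ⟨ht, ht1⟩)))
  rw [← EReal.coe_add, ← EReal.coe_add, EReal.coe_le_coe_iff] at h
  have : t * fu ≤ t * (fw + ⟪G, w - u⟫ + t * C w) := by nlinarith
  exact le_of_mul_le_mul_left this ht

lemma one_div_mul_norm_add_smul_sq {κ : ℝ} (hκ : κ ≠ 0) (e r : E) :
    1 / κ * ‖e + κ • r‖ ^ 2 = 1 / κ * ‖e‖ ^ 2 + 2 * ⟪e, r⟫ + κ * ‖r‖ ^ 2 := by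
  rw [norm_add_sq_real, norm_smul, real_inner_smul_right, Real.norm_eq_abs, mul_pow, sq_abs]
  field_simp

lemma LinearMap.IsSymmetric.inner_sub_map_sub {S : E →ₗ[ℝ] E} (hS : S.IsSymmetric) (a b : E) :
    ⟪a - b, S (a - b)⟫ = ⟪a, S a⟫ - 2 * ⟪S b, a⟫ + ⟪b, S b⟫ := by
  simp only [map_sub, inner_sub_left, inner_sub_right]
  linear_combination hS b a + real_inner_comm a (S b)

lemma LinearMap.IsSymmetric.two_mul_inner_map_le {T : E →ₗ[ℝ] E} (hT : T.IsSymmetric)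
    (hTpsd : ∀ w, 0 ≤ ⟪w, T w⟫) (a b : E) : 2 * ⟪T b, a⟫ ≤ ⟪a, T a⟫ + ⟪b, T b⟫ := by
  linarith [hTpsd (a - b), hT.inner_sub_map_sub a b]

lemma min_one_one_sub_add_inv (τ : ℝ) :
    min 1 (1 - τ + τ⁻¹) = 2 - τ - max (1 - τ) (1 - τ⁻¹) := by
  rw [← min_sub_sub_left]; congr 1 <;> ring

lemma two_mul_one_sub_mul_inner_le {τ : ℝ} (hτ : 0 < τ) (r d : E) :
    2 * (1 - τ) * ⟪r, d⟫
      ≤ (1 - min τ (1 + τ - τ ^ 2)) * ‖d‖ ^ 2 + max (1 - τ) (1 - τ⁻¹) * ‖r‖ ^ 2 := by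
  rcases le_total τ 1 with hτ1 | hτ1
  · have hinv : 1 ≤ τ⁻¹ := (one_le_inv₀ hτ).2 hτ1
    rw [min_eq_left (by nlinarith), max_eq_left (by linarith)]
    have h := mul_nonneg (sub_nonneg.2 hτ1) (sq_nonneg ‖r - d‖)
    rw [norm_sub_sq_real] at h
    linarith
  · have hinv : τ⁻¹ ≤ 1 := inv_le_one_of_one_le₀ hτ1
    rw [min_eq_right (by nlinarith), max_eq_right (by linarith)]
    have h : 0 ≤ (τ - 1) / τ * ‖τ • d + r‖ ^ 2 :=
      mul_nonneg (div_nonneg (sub_nonneg.2 hτ1) hτ.le) (sq_nonneg _)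
    have hsq : (τ - 1) / τ * ‖τ • d + r‖ ^ 2
        = (τ ^ 2 - τ) * ‖d‖ ^ 2 + (1 - τ⁻¹) * ‖r‖ ^ 2 - 2 * (1 - τ) * ⟪r, d⟫ := by
      rw [norm_add_sq_real, norm_smul, real_inner_smul_left, Real.norm_eq_abs, abs_of_pos hτ,
        real_inner_comm]
      field_simp
      ring
    linarith

end RealInnerProduct

section Adjoint

variable {E F : Type*} [NormedAddCommGroup E] [InnerProductSpace ℝ E] [FiniteDimensional ℝ E]
  [NormedAddCommGroup F] [InnerProductSpace ℝ F] [FiniteDimensional ℝ F]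

def subproblemQuad (A : F →ₗ[ℝ] E) (S : E →ₗ[ℝ] E) (σ : ℝ) (x' v : F) (w' w : E) : ℝ :=
  ⟪x', A.adjoint w + v⟫ + σ / 2 * ‖A.adjoint w + v‖ ^ 2 + ⟪w - w', S (w - w')⟫ / 2

lemma subproblemQuad_add_smul (A : F →ₗ[ℝ] E) {S : E →ₗ[ℝ] E} (hS : S.IsSymmetric) (σ : ℝ)
    (x' v : F) (w' u h : E) (t : ℝ) :
    subproblemQuad A S σ x' v w' (u + t • h) = subproblemQuad A S σ x' v w' u
      + t * ⟪A (x' + σ • (A.adjoint u + v)) + S (u - w'), h⟫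
      + t ^ 2 * (σ / 2 * ‖A.adjoint h‖ ^ 2 + ⟪h, S h⟫ / 2) := by
  have h2 : u + t • h - w' = (u - w') + t • h := by abel
  simp only [subproblemQuad, h2, norm_add_sq_real, map_add, map_smul, inner_add_left,
    inner_add_right, real_inner_smul_left, real_inner_smul_right, norm_smul, Real.norm_eq_abs,
    mul_pow, sq_abs, LinearMap.adjoint_inner_right]
  linear_combination (-t / 2) * hS (u - w') h + (t / 2) * real_inner_comm (S (u - w')) h
    + t * σ * LinearMap.adjoint_inner_left A v h + t * σ * real_inner_comm (A v) h

lemma neg_mem_subdiff_of_forall_le_add_subproblemQuad {f : E → EReal}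
    (hconv : ∀ u v : E, ∀ a b : ℝ, 0 ≤ a → 0 ≤ b → a + b = 1 →
      f (a • u + b • v) ≤ (a : EReal) * f u + (b : EReal) * f v)
    (hbot : ∀ u, f u ≠ ⊥) (A : F →ₗ[ℝ] E) {S : E →ₗ[ℝ] E} (hS : S.IsSymmetric) {σ : ℝ}
    {x' v : F} {w' u : E} {r : ℝ} (hu : f u ≠ ⊤)
    (hmin : ∀ w, f u + ((subproblemQuad A S σ x' v w' u + r : ℝ) : EReal)
      ≤ f w + ((subproblemQuad A S σ x' v w' w + r : ℝ) : EReal)) :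
    -(A (x' + σ • (A.adjoint u + v)) + S (u - w')) ∈ subdiff f u := by
  refine neg_mem_subdiff_of_forall_le_add hconv hbot
    (q := fun w => subproblemQuad A S σ x' v w' w + r)
    (C := fun w => σ / 2 * ‖A.adjoint (w - u)‖ ^ 2 + ⟪w - u, S (w - u)⟫ / 2) hu
    (fun w t _ => ?_) hmin
  rw [subproblemQuad_add_smul A hS]
  linarith

lemma SubMono.inner_le_zero {f : E → EReal} {Sf : E →ₗ[ℝ] E} (h : SubMono f Sf)
    (A : F →ₗ[ℝ] E) {u u' q q' : E} {p p' : F} (hu : -(A p + q) ∈ subdiff f u)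
    (hu' : -(A p' + q') ∈ subdiff f u') :
    ⟪u - u', Sf (u - u')⟫ + ⟪p - p', A.adjoint (u - u')⟫ + ⟪q - q', u - u'⟫ ≤ 0 := by
  have hmono := h u u' _ _ hu hu'
  have hdiff : -(A p + q) - -(A p' + q') = -(A (p - p') + (q - q')) := by
    rw [map_sub]; abel
  rw [hdiff, inner_neg_left, inner_add_left, ← LinearMap.adjoint_inner_right] at hmono
  linarith

end Adjoint

section SPADMM

variable {f : Y → EReal} {g : Z → EReal} {A : X →ₗ[ℝ] Y} {B : X →ₗ[ℝ] Z} {c : X} {σ τ : ℝ}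
  {S : Y →ₗ[ℝ] Y} {T : Z →ₗ[ℝ] Z} {x : ℕ → X} {y : ℕ → Y} {z : ℕ → Z} {xb : X} {yb : Y} {zb : Z}

lemma ysub_eq {x' : X} {y' : Y} {z' : Z} {r : ℝ} (hr : g z' = r) (w : Y) :
    ysub f g A B c σ S x' y' z' w
      = f w + ((subproblemQuad A S σ x' (B.adjoint z' - c) y' w + r : ℝ) : EReal) := by
  simp only [ysub, augL, subproblemQuad, hr, add_sub_assoc]
  push_cast
  ac_rfl

lemma zsub_eq {x' : X} {y' : Y} {z' : Z} {r : ℝ} (hr : f y' = r) (w : Z) :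
    zsub f g A B c σ T x' y' z' w
      = g w + ((subproblemQuad B T σ x' (A.adjoint y' - c) z' w + r : ℝ) : EReal) := by
  simp only [zsub, augL, subproblemQuad, hr, add_sub_right_comm _ _ c]
  push_cast
  ac_rfl

lemma IsKKT.residual_eq (hkkt : IsKKT f g A B c xb yb zb) (y' : Y) (z' : Z) :
    A.adjoint y' + B.adjoint z' - c = A.adjoint (y' - yb) + B.adjoint (z' - zb) := by
  rw [← hkkt.2.2, map_sub, map_sub]; abel

namespace IsSPADMM

lemma f_succ_ne_top (hseq : IsSPADMM f g A B c σ τ S T x y z) (hf : ∃ w, f w ≠ ⊤) {k : ℕ}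
    {r : ℝ} (hr : g (z k) = r) : f (y (k + 1)) ≠ ⊤ :=
  ne_top_of_forall_le_add hf
    (q := fun w => subproblemQuad A S σ (x k) (B.adjoint (z k) - c) (y k) w + r)
    fun w => by simpa only [ysub_eq hr] using hseq.2.2.1 k w

/-- Finiteness has to be propagated from `z⁰`: if `g (z k) = ⊤`, the `y`-subproblem objective is
identically `⊤` and `y (k + 1)` is unconstrained. -/
lemma g_ne_top (hseq : IsSPADMM f g A B c σ τ S T x y z) (hf : ProperConvexLsc f)
    (hg : ProperConvexLsc g) : ∀ k, g (z k) ≠ ⊤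
  | 0 => hseq.2.1
  | k + 1 => by
    lift g (z k) to ℝ using ⟨hseq.g_ne_top hf hg k, hg.2.1 _⟩ with r hr
    lift f (y (k + 1)) to ℝ using ⟨hseq.f_succ_ne_top hf.1 hr.symm, hf.2.1 _⟩ with s hs
    exact ne_top_of_forall_le_add hg.1
      (q := fun w => subproblemQuad B T σ (x k) (A.adjoint (y (k + 1)) - c) (z k) w + s)
      fun w => by simpa only [zsub_eq hs.symm] using hseq.2.2.2.1 k w

lemma neg_mem_subdiff_f (hseq : IsSPADMM f g A B c σ τ S T x y z) (hf : ProperConvexLsc f)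
    (hg : ProperConvexLsc g) (hS : S.IsSymmetric) (k : ℕ) :
    -(A (x k + σ • (A.adjoint (y (k + 1)) + B.adjoint (z k) - c)) + S (y (k + 1) - y k))
      ∈ subdiff f (y (k + 1)) := by
  lift g (z k) to ℝ using ⟨hseq.g_ne_top hf hg k, hg.2.1 _⟩ with r hr
  rw [add_sub_assoc]
  exact neg_mem_subdiff_of_forall_le_add_subproblemQuad hf.2.2.1 hf.2.1 A hS
    (hseq.f_succ_ne_top hf.1 hr.symm)
    fun w => by simpa only [ysub_eq hr.symm] using hseq.2.2.1 k w

lemma neg_mem_subdiff_g (hseq : IsSPADMM f g A B c σ τ S T x y z) (hf : ProperConvexLsc f)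
    (hg : ProperConvexLsc g) (hT : T.IsSymmetric) (k : ℕ) :
    -(B (x k + σ • (A.adjoint (y (k + 1)) + B.adjoint (z (k + 1)) - c)) + T (z (k + 1) - z k))
      ∈ subdiff g (z (k + 1)) := by
  lift g (z k) to ℝ using ⟨hseq.g_ne_top hf hg k, hg.2.1 _⟩ with r hr
  lift f (y (k + 1)) to ℝ using ⟨hseq.f_succ_ne_top hf.1 hr.symm, hf.2.1 _⟩ with s hs
  rw [add_comm (A.adjoint _), add_sub_assoc]
  exact neg_mem_subdiff_of_forall_le_add_subproblemQuad hg.2.2.1 hg.2.1 B hT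
    (hseq.g_ne_top hf hg (k + 1))
    fun w => by simpa only [zsub_eq hs.symm] using hseq.2.2.2.1 k w

lemma inner_Sf_le_zero (hseq : IsSPADMM f g A B c σ τ S T x y z) (hf : ProperConvexLsc f)
    (hg : ProperConvexLsc g) (hS : S.IsSymmetric) {Sf : Y →ₗ[ℝ] Y} (hSf : SubMono f Sf)
    (hkkt : IsKKT f g A B c xb yb zb) (k : ℕ) :
    ⟪y (k + 1) - yb, Sf (y (k + 1) - yb)⟫
      + ⟪x k - xb + σ • (A.adjoint (y (k + 1) - yb) + B.adjoint (z (k + 1) - zb)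
          - B.adjoint (z (k + 1) - z k)), A.adjoint (y (k + 1) - yb)⟫
      + ⟪S (y (k + 1) - y k), y (k + 1) - yb⟫ ≤ 0 := by
  have h := hSf.inner_le_zero A (hseq.neg_mem_subdiff_f hf hg hS k)
    (by simpa using hkkt.1 : -(A xb + 0) ∈ subdiff f yb)
  have hvec : x k + σ • (A.adjoint (y (k + 1) - yb) + B.adjoint (z k - zb)) - xb
      = x k - xb + σ • (A.adjoint (y (k + 1) - yb) + B.adjoint (z (k + 1) - zb)
          - B.adjoint (z (k + 1) - z k)) := by
    simp only [map_sub]; module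
  rwa [hkkt.residual_eq, sub_zero, hvec] at h

lemma inner_Sg_le_zero (hseq : IsSPADMM f g A B c σ τ S T x y z) (hf : ProperConvexLsc f)
    (hg : ProperConvexLsc g) (hT : T.IsSymmetric) {Sg : Z →ₗ[ℝ] Z} (hSg : SubMono g Sg)
    (hkkt : IsKKT f g A B c xb yb zb) (k : ℕ) :
    ⟪z (k + 1) - zb, Sg (z (k + 1) - zb)⟫
      + ⟪x k - xb + σ • (A.adjoint (y (k + 1) - yb) + B.adjoint (z (k + 1) - zb)),
          B.adjoint (z (k + 1) - zb)⟫
      + ⟪T (z (k + 1) - z k), z (k + 1) - zb⟫ ≤ 0 := by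
  have h := hSg.inner_le_zero B (hseq.neg_mem_subdiff_g hf hg hT k)
    (by simpa using hkkt.2.1 : -(B xb + 0) ∈ subdiff g zb)
  rwa [hkkt.residual_eq, sub_zero, add_sub_right_comm] at h

lemma inner_Sg_sub_le_zero (hseq : IsSPADMM f g A B c σ τ S T x y z) (hf : ProperConvexLsc f)
    (hg : ProperConvexLsc g) (hT : T.IsSymmetric) {Sg : Z →ₗ[ℝ] Z} (hSg : SubMono g Sg)
    (hkkt : IsKKT f g A B c xb yb zb) {k : ℕ} (hk : 1 ≤ k) :
    ⟪z (k + 1) - z k, Sg (z (k + 1) - z k)⟫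
      + ⟪σ • (A.adjoint (y (k + 1) - yb) + B.adjoint (z (k + 1) - zb))
          - ((1 - τ) * σ) • (A.adjoint (y k - yb) + B.adjoint (z k - zb)),
          B.adjoint (z (k + 1) - z k)⟫
      + ⟪T (z (k + 1) - z k) - T (z k - z (k - 1)), z (k + 1) - z k⟫ ≤ 0 := by
  obtain ⟨j, rfl⟩ := Nat.exists_eq_add_of_le' hk
  have h := hSg.inner_le_zero B (hseq.neg_mem_subdiff_g hf hg hT (j + 1))
    (hseq.neg_mem_subdiff_g hf hg hT j)
  rw [hseq.2.2.2.2 j, hkkt.residual_eq, hkkt.residual_eq] at h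
  rw [Nat.add_sub_cancel]
  convert h using 4
  module

lemma psiSeq_sub_psiSeq_succ (hseq : IsSPADMM f g A B c σ τ S T x y z)
    (hkkt : IsKKT f g A B c xb yb zb) (hτσ : τ * σ ≠ 0) (hS : S.IsSymmetric)
    (hT : T.IsSymmetric) (k : ℕ) :
    PsiSeq B σ τ S T x y z xb yb zb k - PsiSeq B σ τ S T x y z xb yb zb (k + 1)
      = -2 * ⟪x k - xb, A.adjoint (y (k + 1) - yb) + B.adjoint (z (k + 1) - zb)⟫
        - τ * σ * ‖A.adjoint (y (k + 1) - yb) + B.adjoint (z (k + 1) - zb)‖ ^ 2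
        - 2 * ⟪S (y (k + 1) - y k), y (k + 1) - yb⟫ + ⟪y (k + 1) - y k, S (y (k + 1) - y k)⟫
        - 2 * ⟪T (z (k + 1) - z k), z (k + 1) - zb⟫ + ⟪z (k + 1) - z k, T (z (k + 1) - z k)⟫
        - 2 * σ * ⟪B.adjoint (z (k + 1) - zb), B.adjoint (z (k + 1) - z k)⟫
        + σ * ‖B.adjoint (z (k + 1) - z k)‖ ^ 2 := by
  have hx : x (k + 1) - xb = (x k - xb)
      + (τ * σ) • (A.adjoint (y (k + 1) - yb) + B.adjoint (z (k + 1) - zb)) := by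
    rw [hseq.2.2.2.2 k, hkkt.residual_eq]; module
  have hy : y k - yb = (y (k + 1) - yb) - (y (k + 1) - y k) := by abel
  have hz : z k - zb = (z (k + 1) - zb) - (z (k + 1) - z k) := by abel
  simp only [PsiSeq]
  rw [hx, one_div_mul_norm_add_smul_sq hτσ, hy, hz, hS.inner_sub_map_sub, hT.inner_sub_map_sub,
    map_sub B.adjoint, norm_sub_sq_real (B.adjoint _)]
  ring

lemma phiSeq_sub_phiSeq_succ_ge (hseq : IsSPADMM f g A B c σ τ S T x y z)
    (hf : ProperConvexLsc f) (hg : ProperConvexLsc g) (hτσ : τ * σ ≠ 0)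
    (hS : S.IsSymmetric) (hT : T.IsSymmetric) (hTpsd : ∀ w, 0 ≤ ⟪w, T w⟫)
    {Sf : Y →ₗ[ℝ] Y} (hSf : SubMono f Sf) {Sg : Z →ₗ[ℝ] Z} (hSg : SubMono g Sg)
    (hSgpsd : ∀ w, 0 ≤ ⟪w, Sg w⟫) (hkkt : IsKKT f g A B c xb yb zb) {k : ℕ} (hk : 1 ≤ k) :
    2 * ⟪y (k + 1) - yb, Sf (y (k + 1) - yb)⟫ + 2 * ⟪z (k + 1) - zb, Sg (z (k + 1) - zb)⟫
      + ⟪y (k + 1) - y k, S (y (k + 1) - y k)⟫ + ⟪z (k + 1) - z k, T (z (k + 1) - z k)⟫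
      + (2 - τ - max (1 - τ) (1 - τ⁻¹)) * σ
          * ‖A.adjoint (y (k + 1) - yb) + B.adjoint (z (k + 1) - zb)‖ ^ 2
      + σ * ‖B.adjoint (z (k + 1) - z k)‖ ^ 2
      - 2 * (1 - τ) * σ * ⟪A.adjoint (y k - yb) + B.adjoint (z k - zb), B.adjoint (z (k + 1) - z k)⟫
      + max (1 - τ) (1 - τ⁻¹) * σ * ‖A.adjoint (y k - yb) + B.adjoint (z k - zb)‖ ^ 2
    ≤ PhiSeq A B σ τ S T x y z xb yb zb k - PhiSeq A B σ τ S T x y z xb yb zb (k + 1) := by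
  have hΨ := hseq.psiSeq_sub_psiSeq_succ hkkt hτσ hS hT k
  have hy := hseq.inner_Sf_le_zero hf hg hS hSf hkkt k
  have hz := hseq.inner_Sg_le_zero hf hg hT hSg hkkt k
  have hdz := hseq.inner_Sg_sub_le_zero hf hg hT hSg hkkt hk
  have hT2 := hT.two_mul_inner_map_le hTpsd (z (k + 1) - z k) (z k - z (k - 1))
  have hSg0 := hSgpsd (z (k + 1) - z k)
  set e := x k - xb
  set u := y (k + 1) - yb
  set v := z (k + 1) - zb
  set dy := y (k + 1) - y k
  set dz := z (k + 1) - z k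
  set dz' := z k - z (k - 1)
  set r := A.adjoint (y k - yb) + B.adjoint (z k - zb)
  set a := A.adjoint u
  set b := B.adjoint v
  set d := B.adjoint dz
  have hab : σ * ‖a + b‖ ^ 2 = σ * ‖a‖ ^ 2 + 2 * σ * ⟪a, b⟫ + σ * ‖b‖ ^ 2 := by
    rw [norm_add_sq_real]; ring
  simp only [inner_add_left, inner_sub_left, inner_add_right, real_inner_smul_left,
    real_inner_self_eq_norm_sq] at hy hz hdz hΨ
  rw [real_inner_comm a b, real_inner_comm a d] at hy
  rw [real_inner_comm dz (T dz)] at hdz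
  simp only [PhiSeq, Nat.add_sub_cancel]
  linarith

end IsSPADMM

end SPADMM

theorem stmt_14_general
    (f : Y → EReal) (g : Z → EReal)
    (hf : ProperConvexLsc f) (hg : ProperConvexLsc g)
    (A : X →ₗ[ℝ] Y) (B : X →ₗ[ℝ] Z) (c : X)
    (σ τ : ℝ) (hσ : 0 < σ) (hτ : 0 < τ)
    (S : Y →ₗ[ℝ] Y) (hSsym : S.IsSymmetric)
    (T : Z →ₗ[ℝ] Z) (hTsym : T.IsSymmetric) (hTpsd : ∀ w : Z, 0 ≤ ⟪w, T w⟫)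
    (Sf : Y →ₗ[ℝ] Y)
    (hSfmono : SubMono f Sf)
    (Sg : Z →ₗ[ℝ] Z) (hSgpsd : ∀ w : Z, 0 ≤ ⟪w, Sg w⟫)
    (hSgmono : SubMono g Sg)
    (xb : X) (yb : Y) (zb : Z) (hkkt : IsKKT f g A B c xb yb zb)
    (x : ℕ → X) (y : ℕ → Y) (z : ℕ → Z)
    (hseq : IsSPADMM f g A B c σ τ S T x y z) :
    ∀ k : ℕ, 1 ≤ k →
      PhiSeq A B σ τ S T x y z xb yb zb k - PhiSeq A B σ τ S T x y z xb yb zb (k + 1) ≥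
        2 * ⟪y (k + 1) - yb, Sf (y (k + 1) - yb)⟫
        + 2 * ⟪z (k + 1) - zb, Sg (z (k + 1) - zb)⟫
        + ⟪y (k + 1) - y k, S (y (k + 1) - y k)⟫
        + ⟪z (k + 1) - z k, T (z (k + 1) - z k)⟫
        + min 1 (1 - τ + τ⁻¹) * σ *
            ‖(LinearMap.adjoint A) (y (k + 1) - yb)
              + (LinearMap.adjoint B) (z (k + 1) - zb)‖ ^ 2
        + min τ (1 + τ - τ ^ 2) * σ *
            ‖(LinearMap.adjoint B) (z (k + 1) - z k)‖ ^ 2 := by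
  intro k hk
  have hdescent := hseq.phiSeq_sub_phiSeq_succ_ge hf hg (mul_pos hτ hσ).ne' hSsym hTsym hTpsd
    hSfmono hSgmono hSgpsd hkkt hk
  have hstep := mul_le_mul_of_nonneg_left (two_mul_one_sub_mul_inner_le hτ
    (A.adjoint (y k - yb) + B.adjoint (z k - zb)) (B.adjoint (z (k + 1) - z k))) hσ.le
  rw [min_one_one_sub_add_inv]
  linarith

/-- **Proposition 2, inequality (14).**  For a KKT solution `(x̄, ȳ, z̄)` and a sequence
generated by the sPADMM, for every `k ≥ 1`:
`Φ_k - Φ_{k+1} ≥ 2‖y_e^{k+1}‖²_{Σ_f} + 2‖z_e^{k+1}‖²_{Σ_g} + ‖y^{k+1}-y^k‖_S²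
+ ‖z^{k+1}-z^k‖_T² + min(1, 1-τ+τ⁻¹) σ ‖A*y_e^{k+1} + B*z_e^{k+1}‖²
+ min(τ, 1+τ-τ²) σ ‖B*(z^{k+1}-z^k)‖²`. -/
theorem stmt_14
    (f : Y → EReal) (g : Z → EReal)
    (hf : ProperConvexLsc f) (hg : ProperConvexLsc g)
    (A : X →ₗ[ℝ] Y) (B : X →ₗ[ℝ] Z) (c : X)
    (σ τ : ℝ) (hσ : 0 < σ) (hτ : 0 < τ)
    (S : Y →ₗ[ℝ] Y) (hSsym : S.IsSymmetric) (hSpsd : ∀ w : Y, 0 ≤ ⟪w, S w⟫)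
    (T : Z →ₗ[ℝ] Z) (hTsym : T.IsSymmetric) (hTpsd : ∀ w : Z, 0 ≤ ⟪w, T w⟫)
    (Sf : Y →ₗ[ℝ] Y) (hSfsym : Sf.IsSymmetric) (hSfpsd : ∀ w : Y, 0 ≤ ⟪w, Sf w⟫)
    (hSfmono : SubMono f Sf)
    (Sg : Z →ₗ[ℝ] Z) (hSgsym : Sg.IsSymmetric) (hSgpsd : ∀ w : Z, 0 ≤ ⟪w, Sg w⟫)
    (hSgmono : SubMono g Sg)
    (xb : X) (yb : Y) (zb : Z) (hkkt : IsKKT f g A B c xb yb zb)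
    (x : ℕ → X) (y : ℕ → Y) (z : ℕ → Z)
    (hseq : IsSPADMM f g A B c σ τ S T x y z) :
    ∀ k : ℕ, 1 ≤ k →
      PhiSeq A B σ τ S T x y z xb yb zb k - PhiSeq A B σ τ S T x y z xb yb zb (k + 1) ≥
        2 * ⟪y (k + 1) - yb, Sf (y (k + 1) - yb)⟫
        + 2 * ⟪z (k + 1) - zb, Sg (z (k + 1) - zb)⟫
        + ⟪y (k + 1) - y k, S (y (k + 1) - y k)⟫
        + ⟪z (k + 1) - z k, T (z (k + 1) - z k)⟫
        + min 1 (1 - τ + τ⁻¹) * σ *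
            ‖(LinearMap.adjoint A) (y (k + 1) - yb)
              + (LinearMap.adjoint B) (z (k + 1) - zb)‖ ^ 2
        + min τ (1 + τ - τ ^ 2) * σ *
            ‖(LinearMap.adjoint B) (z (k + 1) - z k)‖ ^ 2 :=
  stmt_14_general f g hf hg A B c σ τ hσ hτ S hSsym T hTsym hTpsd Sf hSfmono Sg hSgpsd hSgmono xb yb
    zb hkkt x y z hseq
end
end
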